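/- arXiv:1605.08656 — 2 statements merged into one kernel-verified Lean document; each statement's English description precedes it below -/
import Mathlib

section
/- Representation of the real differential of a slice regular function: let f : Ω_D → ℍ be slice regular with continuously differentiable stem components, and let x = α + Iβ ∈ Ω_D with β > 0, I ∈ 𝕊. Then f is real-differentiable at x, and for every decomposition v = v₁ + v₂ of a tangent vector v ∈ ℍ with v₁ ∈ ℂ_I = ℝ + ℝI and v₂ in the orthogonal complement of ℂ_I (with respect to the standard Euclidean inner product on ℍ ≅ ℝ⁴), the real Fréchet derivative satisfies (df)_x(v₁ + v₂) = v₁·(∂f/∂x)(x) + v₂·(∂_s f)(x). -/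
/-! Off the real axis every quaternion is `q = Re q + J(q) ‖Im q‖` with `J(q) = Im q / ‖Im q‖`
an imaginary unit, so near `x = α + Iβ` the slice function is `f = F₁ ∘ ζ + J · (F₂ ∘ ζ)` with
`ζ(q) = Re q + i ‖Im q‖`. Both `ζ` and `J` are smooth there, with `dζₓ v = Re v + i ⟪I, v⟫` and
`dJₓ v = β⁻¹ (Im v - ⟪I, v⟫ I)`. On `ℂ_I` the term `dJₓ` vanishes and the Cauchy–Riemann equations
turn `D₁ ∘ dζₓ + I · D₂ ∘ dζₓ` into right multiplication by `∂f/∂x`; on `ℂ_I^⊥` the term `dζₓ`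
vanishes and `dJₓ = β⁻¹ · id`, which leaves `v ↦ v β⁻¹ F₂(z) = v ∂ₛf(x)`. -/

open Filter Topology
open Quaternion
open scoped RealInnerProductSpace

section NormDeriv

variable {F : Type*} [NormedAddCommGroup F] [InnerProductSpace ℝ F]

theorem hasFDerivAt_norm_of_ne_zero {x : F} (hx : x ≠ 0) :
    HasFDerivAt (‖·‖) (‖x‖⁻¹ • innerSL ℝ x) x := by
  have h := (Real.hasDerivAt_sqrt (pow_ne_zero 2 (norm_ne_zero_iff.mpr hx))).comp_hasFDerivAt x
    (hasStrictFDerivAt_norm_sq x).hasFDerivAt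
  have hsqrt : ((fun t => √t) ∘ fun y : F => ‖y‖ ^ 2) = (‖·‖) :=
    funext fun y => Real.sqrt_sq (norm_nonneg y)
  rw [hsqrt, Real.sqrt_sq (norm_nonneg x)] at h
  refine h.congr_fderiv ?_
  ext v
  simp
  field_simp

end NormDeriv

namespace Quaternion

theorem norm_eq_one_of_sq_eq_neg_one {I : ℍ} (hI : I ^ 2 = -1) : ‖I‖ = 1 := by
  have h : ‖I‖ ^ 2 = 1 := by rw [← norm_pow, hI, norm_neg, norm_one]
  exact (pow_eq_one_iff_of_nonneg (norm_nonneg I) two_ne_zero).mp h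

theorem re_eq_zero_of_sq_eq_neg_one {I : ℍ} (hI : I ^ 2 = -1) : I.re = 0 := by
  refine sq_eq_neg_normSq.mp ?_
  rw [hI, normSq_eq_norm_mul_self, norm_eq_one_of_sq_eq_neg_one hI]
  simp

theorem sq_eq_neg_one_of_re_eq_zero {J : ℍ} (hre : J.re = 0) (hJ : ‖J‖ = 1) : J ^ 2 = -1 := by
  rw [sq_eq_neg_normSq.mpr hre, normSq_eq_norm_mul_self, hJ]
  simp

theorem inv_eq_neg_of_sq_eq_neg_one {I : ℍ} (hI : I ^ 2 = -1) : I⁻¹ = -I :=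
  inv_eq_of_mul_eq_one_right (by rw [mul_neg, ← sq, hI, neg_neg])

theorem im_eq_self_of_re_eq_zero {v : ℍ} (hv : v.re = 0) : v.im = v := by
  ext <;> simp [hv]

theorem inner_one_left (v : ℍ) : ⟪1, v⟫ = v.re := by simp [inner_def]

theorem inner_im_right_of_re_eq_zero {J : ℍ} (hJ : J.re = 0) (v : ℍ) : ⟪J, v.im⟫ = ⟪J, v⟫ := by
  simp [inner_def, hJ]
  ring

theorem re_eq_zero_of_mem_orthogonal_span {J v : ℍ} (hv : v ∈ (Submodule.span ℝ {1, J})ᗮ) :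
    v.re = 0 := by
  rw [← inner_one_left]
  exact (Submodule.mem_orthogonal _ _).mp hv 1 (Submodule.subset_span (by simp))

theorem inner_eq_zero_of_mem_orthogonal_span {J v : ℍ} (hv : v ∈ (Submodule.span ℝ {1, J})ᗮ) :
    ⟪J, v⟫ = 0 :=
  (Submodule.mem_orthogonal _ _).mp hv J (Submodule.subset_span (by simp))

theorem re_coe_add_mul_coe {I : ℍ} (hI : I ^ 2 = -1) (α β : ℝ) :
    ((α : ℍ) + I * (β : ℍ)).re = α := by
  simp [re_eq_zero_of_sq_eq_neg_one hI]

theorem im_coe_add_mul_coe {I : ℍ} (hI : I ^ 2 = -1) (α β : ℝ) :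
    ((α : ℍ) + I * (β : ℍ)).im = β • I := by
  rw [mul_coe_eq_smul]
  ext <;> simp [re_eq_zero_of_sq_eq_neg_one hI]

theorem norm_im_coe_add_mul_coe {I : ℍ} (hI : I ^ 2 = -1) (α : ℝ) {β : ℝ} (hβ : 0 ≤ β) :
    ‖((α : ℍ) + I * (β : ℍ)).im‖ = β := by
  rw [im_coe_add_mul_coe hI, norm_smul, norm_eq_one_of_sq_eq_neg_one hI, Real.norm_of_nonneg hβ,
    mul_one]

theorem star_coe_add_mul_coe {I : ℍ} (hI : I ^ 2 = -1) (α β : ℝ) :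
    star ((α : ℍ) + I * (β : ℍ)) = α + (-I) * β := by
  rw [star_add, star_mul, star_coe, star_coe, star_eq_neg.mpr (re_eq_zero_of_sq_eq_neg_one hI),
    ← coe_commutes]

noncomputable def reCLM : ℍ →L[ℝ] ℝ := (QuaternionAlgebra.reₗ _ _ _).toContinuousLinearMap

noncomputable def imCLM : ℍ →L[ℝ] ℍ :=
  LinearMap.toContinuousLinearMap
    { toFun := Quaternion.im
      map_add' := im_add
      map_smul' := fun r q => by ext <;> simp }

@[simp] theorem imCLM_apply (q : ℍ) : imCLM q = q.im := rfl

noncomputable def imUnit (q : ℍ) : ℍ := ‖q.im‖⁻¹ • q.im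

noncomputable def sliceCoord (q : ℍ) : ℂ := ⟨q.re, ‖q.im‖⟩

@[simp] theorem sliceCoord_re (q : ℍ) : (sliceCoord q).re = q.re := rfl

@[simp] theorem sliceCoord_im (q : ℍ) : (sliceCoord q).im = ‖q.im‖ := rfl

theorem continuous_sliceCoord : Continuous sliceCoord :=
  Complex.equivRealProdCLM.symm.continuous.comp
    (continuous_re.prodMk (continuous_norm.comp continuous_im))

theorem re_imUnit (q : ℍ) : (imUnit q).re = 0 := by simp [imUnit]

theorem imUnit_sq {q : ℍ} (hq : q.im ≠ 0) : imUnit q ^ 2 = -1 :=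
  sq_eq_neg_one_of_re_eq_zero (re_imUnit q) (by simp [imUnit, norm_smul, hq])

theorem norm_im_smul_imUnit (q : ℍ) : ‖q.im‖ • imUnit q = q.im := by
  rcases eq_or_ne q.im 0 with hq | hq
  · simp [hq]
  · simp [imUnit, smul_smul, hq]

theorem re_add_imUnit_mul_sliceCoord_im (q : ℍ) :
    ((sliceCoord q).re : ℍ) + imUnit q * ((sliceCoord q).im : ℍ) = q := by
  rw [sliceCoord_re, sliceCoord_im, mul_coe_eq_smul, norm_im_smul_imUnit, re_add_im]

theorem sliceCoord_coe_add_mul_coe {I : ℍ} (hI : I ^ 2 = -1) {z : ℂ} (hz : 0 ≤ z.im) :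
    sliceCoord ((z.re : ℍ) + I * (z.im : ℍ)) = z :=
  Complex.ext (re_coe_add_mul_coe hI _ _) (norm_im_coe_add_mul_coe hI _ hz)

theorem imUnit_coe_add_mul_coe {I : ℍ} (hI : I ^ 2 = -1) (α : ℝ) {β : ℝ} (hβ : 0 < β) :
    imUnit ((α : ℍ) + I * (β : ℍ)) = I := by
  rw [imUnit, norm_im_coe_add_mul_coe hI α hβ.le, im_coe_add_mul_coe hI, smul_smul,
    inv_mul_cancel₀ hβ.ne', one_smul]

theorem hasFDerivAt_norm_im {q : ℍ} (hq : q.im ≠ 0) :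
    HasFDerivAt (fun p : ℍ => ‖p.im‖) (innerSL ℝ (imUnit q)) q := by
  refine ((hasFDerivAt_norm_of_ne_zero hq).comp q imCLM.hasFDerivAt).congr_fderiv ?_
  ext v
  simp [imUnit, inner_im_right_of_re_eq_zero (re_im q)]

noncomputable def sliceCoordDeriv (J : ℍ) : ℍ →L[ℝ] ℂ :=
  (Complex.equivRealProdCLM.symm : ℝ × ℝ →L[ℝ] ℂ).comp (reCLM.prod (innerSL ℝ J))

@[simp] theorem sliceCoordDeriv_apply (J v : ℍ) : sliceCoordDeriv J v = ⟨v.re, ⟪J, v⟫⟩ := rfl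

theorem hasFDerivAt_sliceCoord {q : ℍ} (hq : q.im ≠ 0) :
    HasFDerivAt sliceCoord (sliceCoordDeriv (imUnit q)) q :=
  Complex.equivRealProdCLM.symm.hasFDerivAt.comp q
    (reCLM.hasFDerivAt.prodMk (hasFDerivAt_norm_im hq))

noncomputable def imUnitDeriv (q : ℍ) : ℍ →L[ℝ] ℍ :=
  ‖q.im‖⁻¹ • (imCLM - (innerSL ℝ (imUnit q)).smulRight (imUnit q))

theorem imUnitDeriv_apply (q v : ℍ) :
    imUnitDeriv q v = ‖q.im‖⁻¹ • (v.im - ⟪imUnit q, v⟫ • imUnit q) := rfl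

theorem hasFDerivAt_imUnit {q : ℍ} (hq : q.im ≠ 0) : HasFDerivAt imUnit (imUnitDeriv q) q := by
  have hn : ‖q.im‖ ≠ 0 := norm_ne_zero_iff.mpr hq
  refine (((hasDerivAt_inv hn).comp_hasFDerivAt q (hasFDerivAt_norm_im hq)).smul
    imCLM.hasFDerivAt).congr_fderiv ?_
  have him : imCLM q = ‖q.im‖ • imUnit q := (norm_im_smul_imUnit q).symm
  refine ContinuousLinearMap.ext fun v => ?_
  simp only [add_apply, smul_apply, Function.comp_apply, ContinuousLinearMap.smulRight_apply,
    him, imCLM_apply, innerSL_apply_apply, imUnitDeriv_apply, smul_eq_mul]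
  match_scalars <;> field_simp

theorem sliceCoordDeriv_smul_one_add_smul {J : ℍ} (hJ : J ^ 2 = -1) (a b : ℝ) :
    sliceCoordDeriv J (a • 1 + b • J) = a • 1 + b • Complex.I := by
  apply Complex.ext <;>
    simp [inner_add_right, real_inner_smul_right, norm_eq_one_of_sq_eq_neg_one hJ,
      re_eq_zero_of_sq_eq_neg_one hJ, inner_def]

theorem sliceCoordDeriv_eq_zero_of_mem_orthogonal_span {J v : ℍ}
    (hv : v ∈ (Submodule.span ℝ {1, J})ᗮ) : sliceCoordDeriv J v = 0 :=
  Complex.ext (re_eq_zero_of_mem_orthogonal_span hv) (inner_eq_zero_of_mem_orthogonal_span hv)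

theorem imUnitDeriv_smul_one_add_smul {q : ℍ} (hq : q.im ≠ 0) (a b : ℝ) :
    imUnitDeriv q (a • 1 + b • imUnit q) = 0 := by
  have hinner : ⟪imUnit q, a • 1 + b • imUnit q⟫ = b := by
    simpa using congrArg Complex.im (sliceCoordDeriv_smul_one_add_smul (imUnit_sq hq) a b)
  rw [imUnitDeriv_apply, hinner]
  simp [im_eq_self_of_re_eq_zero (re_imUnit q)]

theorem imUnitDeriv_eq_smul_of_mem_orthogonal_span {q v : ℍ}
    (hv : v ∈ (Submodule.span ℝ {1, imUnit q})ᗮ) : imUnitDeriv q v = ‖q.im‖⁻¹ • v := by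
  rw [imUnitDeriv_apply, inner_eq_zero_of_mem_orthogonal_span hv, zero_smul, sub_zero,
    im_eq_self_of_re_eq_zero (re_eq_zero_of_mem_orthogonal_span hv)]

section SliceFunction

def IsSliceFunction (D : Set ℂ) (F₁ F₂ : ℂ → ℍ) (f : ℍ → ℍ) : Prop :=
  ∀ z ∈ D, ∀ I : ℍ, I ^ 2 = -1 → f ((z.re : ℍ) + I * (z.im : ℍ)) = F₁ z + I * F₂ z

noncomputable def sphericalDeriv (f : ℍ → ℍ) (x : ℍ) : ℍ :=
  (2 : ℝ)⁻¹ • (x.im⁻¹ * (f x - f (star x)))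

noncomputable def sliceDifferential (q : ℍ) (D₁ D₂ : ℂ →L[ℝ] ℍ) (c : ℍ) : ℍ →L[ℝ] ℍ :=
  D₁.comp (sliceCoordDeriv (imUnit q))
    + (imUnit q • D₂.comp (sliceCoordDeriv (imUnit q)) + (imUnitDeriv q).smulRight c)

theorem sliceDifferential_apply_of_mem_span {q : ℍ} (hq : q.im ≠ 0) {D₁ D₂ : ℂ →L[ℝ] ℍ}
    (hCR : D₁ 1 = D₂ Complex.I ∧ D₁ Complex.I = -D₂ 1) (c : ℍ) {v : ℍ}
    (hv : v ∈ Submodule.span ℝ {1, imUnit q}) :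
    sliceDifferential q D₁ D₂ c v = v * (D₁ 1 + imUnit q * D₂ 1) := by
  obtain ⟨a, b, rfl⟩ := Submodule.mem_span_pair.mp hv
  simp only [sliceDifferential, add_apply, ContinuousLinearMap.comp_apply, smul_apply,
    ContinuousLinearMap.smulRight_apply]
  rw [sliceCoordDeriv_smul_one_add_smul (imUnit_sq hq), imUnitDeriv_smul_one_add_smul hq,
    zero_smul, add_zero]
  simp only [map_add, map_smul, ← hCR.1, hCR.2]
  simp only [smul_eq_mul, add_mul, mul_add, smul_mul_assoc, mul_smul_comm, one_mul, ← mul_assoc,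
    ← sq, imUnit_sq hq, neg_one_mul]
  abel

theorem sliceDifferential_apply_of_mem_orthogonal_span (q : ℍ) (D₁ D₂ : ℂ →L[ℝ] ℍ) (c : ℍ)
    {v : ℍ} (hv : v ∈ (Submodule.span ℝ {1, imUnit q})ᗮ) :
    sliceDifferential q D₁ D₂ c v = v * (‖q.im‖⁻¹ • c) := by
  simp [sliceDifferential, sliceCoordDeriv_eq_zero_of_mem_orthogonal_span hv,
    imUnitDeriv_eq_smul_of_mem_orthogonal_span hv]

variable {D : Set ℂ} {F₁ F₂ : ℂ → ℍ} {f : ℍ → ℍ}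

theorem IsSliceFunction.eventuallyEq (hf : IsSliceFunction D F₁ F₂ f) (hD : IsOpen D) {q : ℍ}
    (hqD : sliceCoord q ∈ D) (hq : q.im ≠ 0) :
    f =ᶠ[𝓝 q] fun p => F₁ (sliceCoord p) + imUnit p * F₂ (sliceCoord p) := by
  have hopen : IsOpen {p : ℍ | sliceCoord p ∈ D ∧ p.im ≠ 0} :=
    (hD.preimage continuous_sliceCoord).inter (isOpen_ne_fun continuous_im continuous_const)
  filter_upwards [hopen.mem_nhds ⟨hqD, hq⟩] with p ⟨hpD, hp⟩
  simpa only [re_add_imUnit_mul_sliceCoord_im] using hf _ hpD _ (imUnit_sq hp)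

theorem IsSliceFunction.hasFDerivAt (hf : IsSliceFunction D F₁ F₂ f) (hD : IsOpen D) {q : ℍ}
    (hqD : sliceCoord q ∈ D) (hq : q.im ≠ 0) {D₁ D₂ : ℂ →L[ℝ] ℍ}
    (hF₁ : HasFDerivAt F₁ D₁ (sliceCoord q)) (hF₂ : HasFDerivAt F₂ D₂ (sliceCoord q)) :
    HasFDerivAt f (sliceDifferential q D₁ D₂ (F₂ (sliceCoord q))) q :=
  ((hF₁.comp q (hasFDerivAt_sliceCoord hq)).add
    ((hasFDerivAt_imUnit hq).mul' (hF₂.comp q (hasFDerivAt_sliceCoord hq)))).congr_of_eventuallyEq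
    (hf.eventuallyEq hD hqD hq)

theorem IsSliceFunction.sphericalDeriv_eq (hf : IsSliceFunction D F₁ F₂ f) {z : ℂ} (hz : z ∈ D)
    {I : ℍ} (hI : I ^ 2 = -1) :
    sphericalDeriv f ((z.re : ℍ) + I * (z.im : ℍ)) = (z.im)⁻¹ • F₂ z := by
  have hinv : (z.im • I)⁻¹ = -(z.im⁻¹ • I) := by
    rw [smul_inv₀, inv_eq_neg_of_sq_eq_neg_one hI, smul_neg]
  rw [sphericalDeriv, im_coe_add_mul_coe hI, hinv, star_coe_add_mul_coe hI, hf z hz I hI,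
    hf z hz (-I) (by rw [neg_sq, hI])]
  simp only [neg_mul, add_sub_add_left_eq_sub, sub_neg_eq_add, mul_add, smul_mul_assoc,
    ← mul_assoc, ← sq, hI, one_mul, smul_neg, neg_neg]
  module

end SliceFunction

end Quaternion

theorem differential_representation_general
    (D : Set ℂ) (hDopen : IsOpen D)
    (F₁ F₂ : ℂ → Quaternion ℝ)
    (f : Quaternion ℝ → Quaternion ℝ)
    (hslice : ∀ z ∈ D, ∀ I : Quaternion ℝ, I ^ 2 = -1 →
      f ((z.re : Quaternion ℝ) + I * (z.im : Quaternion ℝ)) = F₁ z + I * F₂ z)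
    (D₁ D₂ : ℂ → (ℂ →L[ℝ] Quaternion ℝ))
    (hF₁ : ∀ z ∈ D, HasFDerivAt F₁ (D₁ z) z)
    (hF₂ : ∀ z ∈ D, HasFDerivAt F₂ (D₂ z) z)
    (hCR : ∀ z ∈ D, D₁ z 1 = D₂ z Complex.I ∧ D₁ z Complex.I = - D₂ z 1)
    (z : ℂ) (hz : z ∈ D) (hβ : 0 < z.im)
    (I : Quaternion ℝ) (hI : I ^ 2 = -1) :
    ∃ L : Quaternion ℝ →L[ℝ] Quaternion ℝ,
      HasFDerivAt f L ((z.re : Quaternion ℝ) + I * (z.im : Quaternion ℝ)) ∧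
      ∀ v₁ v₂ : Quaternion ℝ,
        v₁ ∈ Submodule.span ℝ ({1, I} : Set (Quaternion ℝ)) →
        v₂ ∈ (Submodule.span ℝ ({1, I} : Set (Quaternion ℝ)))ᗮ →
        L (v₁ + v₂)
          = v₁ * (D₁ z 1 + I * (D₂ z 1))
            + v₂ * ((2 : ℝ)⁻¹ •
                ((Quaternion.im ((z.re : Quaternion ℝ) + I * (z.im : Quaternion ℝ)))⁻¹
                  * (f ((z.re : Quaternion ℝ) + I * (z.im : Quaternion ℝ))
                      - f (star ((z.re : Quaternion ℝ) + I * (z.im : Quaternion ℝ)))))) := by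
  have hf : IsSliceFunction D F₁ F₂ f := hslice
  set x : ℍ := (z.re : ℍ) + I * (z.im : ℍ)
  have hJ : imUnit x = I := imUnit_coe_add_mul_coe hI z.re hβ
  have hζ : sliceCoord x = z := sliceCoord_coe_add_mul_coe hI hβ.le
  have hnorm : ‖x.im‖ = z.im := norm_im_coe_add_mul_coe hI z.re hβ.le
  have hx : x.im ≠ 0 := norm_pos_iff.mp (hnorm ▸ hβ)
  refine ⟨_, hf.hasFDerivAt hDopen (hζ ▸ hz) hx (hζ ▸ hF₁ z hz) (hζ ▸ hF₂ z hz),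
    fun v₁ v₂ hv₁ hv₂ => ?_⟩
  rw [← hJ] at hv₁ hv₂
  rw [map_add, hζ, sliceDifferential_apply_of_mem_span hx (hCR z hz) _ hv₁,
    sliceDifferential_apply_of_mem_orthogonal_span _ _ _ _ hv₂, hJ, hnorm]
  exact congrArg (_ + v₂ * ·) (hf.sphericalDeriv_eq hz hI).symm

/-- **Representation of the real differential of a slice regular function**:
`f` is real-differentiable at `x = α + Iβ` and
`(df)ₓ(v₁ + v₂) = v₁·(∂f/∂x)(x) + v₂·(∂ₛf)(x)` for `v₁ ∈ ℂ_I`, `v₂ ⊥ ℂ_I`. -/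
theorem differential_representation
    (D : Set ℂ) (hDopen : IsOpen D)
    (hDsymm : ∀ z ∈ D, (starRingEnd ℂ) z ∈ D)
    (F₁ F₂ : ℂ → Quaternion ℝ)
    (hstem : ∀ z ∈ D,
      F₁ ((starRingEnd ℂ) z) = F₁ z ∧ F₂ ((starRingEnd ℂ) z) = - F₂ z)
    (f : Quaternion ℝ → Quaternion ℝ)
    (hslice : ∀ z ∈ D, ∀ I : Quaternion ℝ, I ^ 2 = -1 →
      f ((z.re : Quaternion ℝ) + I * (z.im : Quaternion ℝ)) = F₁ z + I * F₂ z)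
    (D₁ D₂ : ℂ → (ℂ →L[ℝ] Quaternion ℝ))
    (hF₁ : ∀ z ∈ D, HasFDerivAt F₁ (D₁ z) z)
    (hF₂ : ∀ z ∈ D, HasFDerivAt F₂ (D₂ z) z)
    (hC1 : ContinuousOn D₁ D ∧ ContinuousOn D₂ D)
    (hCR : ∀ z ∈ D, D₁ z 1 = D₂ z Complex.I ∧ D₁ z Complex.I = - D₂ z 1)
    (z : ℂ) (hz : z ∈ D) (hβ : 0 < z.im)
    (I : Quaternion ℝ) (hI : I ^ 2 = -1) :
    ∃ L : Quaternion ℝ →L[ℝ] Quaternion ℝ,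
      HasFDerivAt f L ((z.re : Quaternion ℝ) + I * (z.im : Quaternion ℝ)) ∧
      ∀ v₁ v₂ : Quaternion ℝ,
        v₁ ∈ Submodule.span ℝ ({1, I} : Set (Quaternion ℝ)) →
        v₂ ∈ (Submodule.span ℝ ({1, I} : Set (Quaternion ℝ)))ᗮ →
        L (v₁ + v₂)
          = v₁ * (D₁ z 1 + I * (D₂ z 1))
            + v₂ * ((2 : ℝ)⁻¹ •
                ((Quaternion.im ((z.re : Quaternion ℝ) + I * (z.im : Quaternion ℝ)))⁻¹
                  * (f ((z.re : Quaternion ℝ) + I * (z.im : Quaternion ℝ))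
                      - f (star ((z.re : Quaternion ℝ) + I * (z.im : Quaternion ℝ)))))) :=
  differential_representation_general D hDopen F₁ F₂ f hslice D₁ D₂ hF₁ hF₂ hCR z hz hβ I hI
end

section
/- The twistor lift lies on the quadric X₀X₃ = X₁X₂ exactly for real slice functions: let f : ℍ∖ℝ → ℍ be a slice regular function induced by the stem function (F₁, F₂) on ℂ∖ℝ. For u in the real span of {1, i} in ℍ and α + iβ ∈ ℂ∖ℝ with β > 0, set I = (1 + u·j)⁻¹·i·(1 + u·j) ∈ 𝕊 and write (1 + u·j)·f(α + Iβ) = X₂ + X₃·j with X₂, X₃ in the real span of {1, i} (this decomposition is unique). Then X₃ = u·X₂ holds for all such u and all α + iβ with β > 0 if and only if F₁ and F₂ take values in ℝ ⊆ ℍ (i.e. f is a real slice function). -/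
/-- The quaternion imaginary unit `i`. -/
noncomputable def qi : Quaternion ℝ := ⟨0, 1, 0, 0⟩

/-- The quaternion imaginary unit `j`. -/
noncomputable def qj : Quaternion ℝ := ⟨0, 0, 1, 0⟩

/-!
With `q = 1 + u j` and `I = q⁻¹ i q` we have `I² = -1` and `q (A + I C) = q A + i (q C)`, so
`q f(α + Iβ) = q F₁(z) + i q F₂(z)` and the quadric condition at `z` only concerns the two
quaternions `A = F₁(z)`, `C = F₂(z)`. If they are real, `i` commutes with `u` and the product is
`X + u X j` with `X = A + i C`. Conversely, the condition for `u = 0, 1, -1` forces the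
imaginary parts of `A` and `C` to vanish. The stem symmetry carries realness from the upper to
the lower half-plane.
-/

open Quaternion

noncomputable abbrev complexLine : Submodule ℝ ℍ[ℝ] := Submodule.span ℝ {1, qi}

@[simp] lemma qi_re : qi.re = 0 := rfl
@[simp] lemma qi_imI : qi.imI = 1 := rfl
@[simp] lemma qi_imJ : qi.imJ = 0 := rfl
@[simp] lemma qi_imK : qi.imK = 0 := rfl
@[simp] lemma qj_re : qj.re = 0 := rfl
@[simp] lemma qj_imI : qj.imI = 0 := rfl
@[simp] lemma qj_imJ : qj.imJ = 1 := rfl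
@[simp] lemma qj_imK : qj.imK = 0 := rfl

lemma mem_complexLine_iff {u : ℍ[ℝ]} : u ∈ complexLine ↔ u.imJ = 0 ∧ u.imK = 0 := by
  rw [Submodule.mem_span_pair]
  constructor
  · rintro ⟨s, t, rfl⟩
    simp
  · rintro ⟨hJ, hK⟩
    exact ⟨u.re, u.imI, by ext <;> simp [hJ, hK]⟩

noncomputable def jSplit₁ (P : ℍ[ℝ]) : ℍ[ℝ] := P.re + P.imI • qi

noncomputable def jSplit₂ (P : ℍ[ℝ]) : ℍ[ℝ] := P.imJ + P.imK • qi

lemma jSplit₁_mem (P : ℍ[ℝ]) : jSplit₁ P ∈ complexLine := mem_complexLine_iff.2 (by simp [jSplit₁])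

lemma jSplit₂_mem (P : ℍ[ℝ]) : jSplit₂ P ∈ complexLine := mem_complexLine_iff.2 (by simp [jSplit₂])

lemma jSplit₁_add_jSplit₂_mul_qj (P : ℍ[ℝ]) : jSplit₁ P + jSplit₂ P * qj = P := by
  ext <;> simp [jSplit₁, jSplit₂]

lemma jSplit_add_mul_qj {X₂ X₃ : ℍ[ℝ]} (h₂ : X₂ ∈ complexLine) (h₃ : X₃ ∈ complexLine) :
    jSplit₁ (X₂ + X₃ * qj) = X₂ ∧ jSplit₂ (X₂ + X₃ * qj) = X₃ := by
  obtain ⟨h₂J, h₂K⟩ := mem_complexLine_iff.1 h₂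
  obtain ⟨h₃J, h₃K⟩ := mem_complexLine_iff.1 h₃
  constructor <;> ext <;> simp [jSplit₁, jSplit₂, *]

lemma forall_eq_add_mul_qj_imp_iff (u P : ℍ[ℝ]) :
    (∀ X₂ X₃ : ℍ[ℝ], X₂ ∈ complexLine → X₃ ∈ complexLine → P = X₂ + X₃ * qj → X₃ = u * X₂) ↔
      jSplit₂ P = u * jSplit₁ P := by
  refine ⟨fun h ↦ h _ _ (jSplit₁_mem P) (jSplit₂_mem P) (jSplit₁_add_jSplit₂_mul_qj P).symm, ?_⟩
  rintro h X₂ X₃ h₂ h₃ rfl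
  rwa [(jSplit_add_mul_qj h₂ h₃).1, (jSplit_add_mul_qj h₂ h₃).2] at h

lemma one_add_mul_qj_ne_zero {u : ℍ[ℝ]} (hu : u ∈ complexLine) : 1 + u * qj ≠ 0 := by
  intro h
  simpa [(mem_complexLine_iff.1 hu).1] using congrArg QuaternionAlgebra.re h

lemma qi_sq : qi ^ 2 = -1 := by ext <;> simp [pow_two]

lemma inv_mul_mul_sq_eq_neg_one {D : Type*} [DivisionRing D] {q x : D} (hq : q ≠ 0)
    (hx : x ^ 2 = -1) : (q⁻¹ * x * q) ^ 2 = -1 := by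
  calc (q⁻¹ * x * q) ^ 2 = q⁻¹ * (x * (q * q⁻¹) * x) * q := by simp only [pow_two, mul_assoc]
    _ = -1 := by rw [mul_inv_cancel₀ hq, mul_one, ← pow_two, hx, mul_neg_one, neg_mul,
      inv_mul_cancel₀ hq]

lemma mul_add_inv_mul_mul {D : Type*} [DivisionRing D] {q : D} (hq : q ≠ 0) (x A C : D) :
    q * (A + q⁻¹ * x * q * C) = q * A + x * (q * C) := by
  simp only [mul_add, ← mul_assoc, mul_inv_cancel₀ hq, one_mul]

lemma exists_neg_eq_coe_iff {x : ℍ[ℝ]} : (∃ r : ℝ, -x = r) ↔ ∃ r : ℝ, x = r :=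
  ⟨fun ⟨r, h⟩ ↦ ⟨-r, by rw [← neg_neg x, h, coe_neg]⟩,
    fun ⟨r, h⟩ ↦ ⟨-r, by rw [h, coe_neg]⟩⟩

lemma forall_jSplit₂_eq_mul_jSplit₁_iff_exists_coe (A C : ℍ[ℝ]) :
    (∀ u ∈ complexLine, jSplit₂ ((1 + u * qj) * A + qi * ((1 + u * qj) * C)) =
        u * jSplit₁ ((1 + u * qj) * A + qi * ((1 + u * qj) * C))) ↔
      (∃ r : ℝ, A = r) ∧ ∃ r : ℝ, C = r := by
  constructor
  · intro h
    have h₀ := h 0 (zero_mem _)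
    have h₁ := h 1 (Submodule.subset_span (by simp))
    have hneg := h (-1) (neg_mem (Submodule.subset_span (by simp)))
    refine ⟨⟨A.re, ?_⟩, ⟨C.re, ?_⟩⟩ <;> ext <;>
      simp [jSplit₁, jSplit₂, Quaternion.ext_iff] at h₀ h₁ hneg ⊢ <;> linarith
  · rintro ⟨⟨a, rfl⟩, ⟨c, rfl⟩⟩ u hu
    obtain ⟨hJ, hK⟩ := mem_complexLine_iff.1 hu
    ext <;> simp [jSplit₁, jSplit₂, hJ, hK] <;> ring

lemma forall_im_ne_zero_iff_forall_im_pos {p : ℂ → Prop}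
    (hp : ∀ z : ℂ, z.im < 0 → p (starRingEnd ℂ z) → p z) :
    (∀ z : ℂ, z.im ≠ 0 → p z) ↔ ∀ z : ℂ, 0 < z.im → p z := by
  refine ⟨fun h z hz ↦ h z hz.ne', fun h z hz ↦ hz.lt_or_gt.elim (fun hneg ↦ ?_) (h z)⟩
  exact hp z hneg (h _ (by simpa using hneg))

theorem twistor_lift_on_quadric_iff_real_general
    (F₁ F₂ : ℂ → Quaternion ℝ)
    (hstem : ∀ z : ℂ, z.im ≠ 0 →
      F₁ ((starRingEnd ℂ) z) = F₁ z ∧ F₂ ((starRingEnd ℂ) z) = - F₂ z)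
    (f : Quaternion ℝ → Quaternion ℝ)
    (hslice : ∀ z : ℂ, z.im ≠ 0 → ∀ I : Quaternion ℝ, I ^ 2 = -1 →
      f ((z.re : Quaternion ℝ) + I * (z.im : Quaternion ℝ)) = F₁ z + I * F₂ z) :
    (∀ u ∈ Submodule.span ℝ ({1, qi} : Set (Quaternion ℝ)),
      ∀ z : ℂ, 0 < z.im →
        ∀ X₂ X₃ : Quaternion ℝ,
          X₂ ∈ Submodule.span ℝ ({1, qi} : Set (Quaternion ℝ)) →
          X₃ ∈ Submodule.span ℝ ({1, qi} : Set (Quaternion ℝ)) →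
          (1 + u * qj) *
              f ((z.re : Quaternion ℝ)
                  + ((1 + u * qj)⁻¹ * qi * (1 + u * qj)) * (z.im : Quaternion ℝ))
            = X₂ + X₃ * qj →
          X₃ = u * X₂)
    ↔
    (∀ z : ℂ, z.im ≠ 0 →
      (∃ r : ℝ, F₁ z = (r : Quaternion ℝ)) ∧ (∃ r : ℝ, F₂ z = (r : Quaternion ℝ))) := by
  have hreal_of_conj : ∀ z : ℂ, z.im < 0 →
      ((∃ r : ℝ, F₁ (starRingEnd ℂ z) = r) ∧ ∃ r : ℝ, F₂ (starRingEnd ℂ z) = r) →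
        (∃ r : ℝ, F₁ z = r) ∧ ∃ r : ℝ, F₂ z = r := by
    intro z hz h
    rwa [(hstem z hz.ne).1, (hstem z hz.ne).2, exists_neg_eq_coe_iff] at h
  rw [forall_im_ne_zero_iff_forall_im_pos hreal_of_conj, forall₂_comm]
  refine forall₂_congr fun z hz ↦ ?_
  rw [← forall_jSplit₂_eq_mul_jSplit₁_iff_exists_coe]
  refine forall₂_congr fun u hu ↦ ?_
  have hq := one_add_mul_qj_ne_zero hu
  rw [forall_eq_add_mul_qj_imp_iff, hslice z hz.ne' _ (inv_mul_mul_sq_eq_neg_one hq qi_sq),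
    mul_add_inv_mul_mul hq]

/-- **The twistor lift lies on the quadric `X₀X₃ = X₁X₂` exactly for real slice
functions**: writing `(1 + u·j)·f(α + Iβ) = X₂ + X₃·j` with
`I = (1 + u·j)⁻¹·i·(1 + u·j)`, the relation `X₃ = u·X₂` holds for all `u` in the
real span of `{1, i}` and all `α + iβ` with `β > 0` iff `F₁, F₂` are real
valued. -/
theorem twistor_lift_on_quadric_iff_real
    (F₁ F₂ : ℂ → Quaternion ℝ)
    (hstem : ∀ z : ℂ, z.im ≠ 0 →
      F₁ ((starRingEnd ℂ) z) = F₁ z ∧ F₂ ((starRingEnd ℂ) z) = - F₂ z)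
    (f : Quaternion ℝ → Quaternion ℝ)
    (hslice : ∀ z : ℂ, z.im ≠ 0 → ∀ I : Quaternion ℝ, I ^ 2 = -1 →
      f ((z.re : Quaternion ℝ) + I * (z.im : Quaternion ℝ)) = F₁ z + I * F₂ z)
    (hreg : ∀ z : ℂ, z.im ≠ 0 → ∃ D₁ D₂ : ℂ →L[ℝ] Quaternion ℝ,
      HasFDerivAt F₁ D₁ z ∧ HasFDerivAt F₂ D₂ z ∧
      D₁ 1 = D₂ Complex.I ∧ D₁ Complex.I = - D₂ 1) :
    (∀ u ∈ Submodule.span ℝ ({1, qi} : Set (Quaternion ℝ)),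
      ∀ z : ℂ, 0 < z.im →
        ∀ X₂ X₃ : Quaternion ℝ,
          X₂ ∈ Submodule.span ℝ ({1, qi} : Set (Quaternion ℝ)) →
          X₃ ∈ Submodule.span ℝ ({1, qi} : Set (Quaternion ℝ)) →
          (1 + u * qj) *
              f ((z.re : Quaternion ℝ)
                  + ((1 + u * qj)⁻¹ * qi * (1 + u * qj)) * (z.im : Quaternion ℝ))
            = X₂ + X₃ * qj →
          X₃ = u * X₂)
    ↔
    (∀ z : ℂ, z.im ≠ 0 →
      (∃ r : ℝ, F₁ z = (r : Quaternion ℝ)) ∧ (∃ r : ℝ, F₂ z = (r : Quaternion ℝ))) :=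
  twistor_lift_on_quadric_iff_real_general F₁ F₂ hstem f hslice
end
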